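/- arXiv:2206.03674 — 4 statements merged into one kernel-verified Lean document; each statement's English description precedes it below -/
import Mathlib

section
/- Let ℤ² denote ℤ × ℤ with componentwise addition, let H be a group acting on ℤ² by additive bijections (the action of each h ∈ H satisfies h • (x + y) = h • x + h • y) and acting on a set A. Let K : A → ℤ² → ℝ be a kernel satisfying the covariance law K a d = K (h • a) (h • d) for all h, a, d, and define the cross-correlation (K^a ⋆ V)(s) = ∑'_{d ∈ ℤ²} K a d * V (s + d). Then the cross-correlation is equivariant under the combined action of translations t ∈ ℤ² and H: for all h ∈ H, t ∈ ℤ², a ∈ A, V : ℤ² → ℝ and s ∈ ℤ², ∑'_{d} K (h • a) d * V (h⁻¹ • (s + d - t)) = (K^a ⋆ V)(h⁻¹ • (s - t)). -/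
theorem tsum_mul_smul_of_covariant {G H A R : Type*} [Group H] [MulAction H G] [MulAction H A]
    [Mul R] [AddCommMonoid R] [TopologicalSpace R] (K : A → G → R)
    (hK : ∀ (h : H) (a : A) (d : G), K a d = K (h • a) (h • d)) (h : H) (a : A) (F : G → R) :
    ∑' d, K (h • a) d * F d = ∑' d, K a d * F (h • d) := by
  rw [← (MulAction.toPerm h).tsum_eq]
  simp only [MulAction.toPerm_apply, ← hK h a]

theorem inv_smul_sub_add_smul {G H : Type*} [AddCommGroup G] [Group H] [MulAction H G]
    (hadd : ∀ (h : H) (x y : G), h • (x + y) = h • x + h • y) (h : H) (x y d : G) :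
    h⁻¹ • (x + h • d - y) = h⁻¹ • (x - y) + d := by
  rw [add_sub_right_comm, hadd, inv_smul_smul]

/-- Cross-correlation with a kernel satisfying the covariance law
`K a d = K (h • a) (h • d)` is equivariant under the combined action of
translations `t ∈ ℤ²` and `H`. -/
theorem cross_correlation_equivariant
    {H A : Type*} [Group H] [MulAction H (ℤ × ℤ)] [MulAction H A]
    (hadd : ∀ (h : H) (x y : ℤ × ℤ), h • (x + y) = h • x + h • y)
    (K : A → ℤ × ℤ → ℝ)
    (hK : ∀ (h : H) (a : A) (d : ℤ × ℤ), K a d = K (h • a) (h • d))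
    (h : H) (t : ℤ × ℤ) (a : A) (V : ℤ × ℤ → ℝ) (s : ℤ × ℤ) :
    ∑' d : ℤ × ℤ, K (h • a) d * V (h⁻¹ • (s + d - t))
      = ∑' d : ℤ × ℤ, K a d * V (h⁻¹ • (s - t) + d) := by
  rw [tsum_mul_smul_of_covariant K hK h a]
  simp only [inv_smul_sub_add_smul hadd]
end

section
/- Let ℤ² denote ℤ × ℤ with componentwise addition, let H be a group acting on ℤ² by additive maps (h • (x + y) = h • x + h • y), and let ρ_in : H →* GL(n, ℝ) and ρ_out : H →* GL(m, ℝ) be group homomorphisms into the groups of invertible n × n and m × m real matrices. Let ψ : ℤ² → Matrix (Fin m) (Fin n) ℝ have finite support and satisfy the H-steerability constraint ψ (h • x) = ρ_out(h) * ψ(x) * (ρ_in(h))⁻¹ for all h ∈ H and x ∈ ℤ². Define the steerable convolution of ψ with a feature field f : ℤ² → (Fin n → ℝ) by (ψ ⋆ f)(s) = ∑'_{s' ∈ ℤ²} (ψ (s - s')).mulVec (f s'). Then for all h ∈ H, t ∈ ℤ², f : ℤ² → (Fin n → ℝ) and s ∈ ℤ²: (ψ ⋆ (fun x => (ρ_in(h)).mulVec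 (f (h⁻¹ • (x - t)))))(s) = (ρ_out(h)).mulVec ((ψ ⋆ f)(h⁻¹ • (s - t))). That is, steerable convolution with an H-steerable kernel is equivariant under the induced representations of the semidirect product of ℤ²-translations and H. -/
/-!
Reindex the convolution sum by the bijection `s' ↦ h • s' + t` of `ℤ²`. Because `h` acts
additively, the kernel argument becomes `h • (h⁻¹ • (s - t) - s')`, and steerability turns
`ψ (h • x) * ρ_in(h)` into `ρ_out(h) * ψ x`. Finally, multiplication by the invertible matrix
`ρ_out(h)` is a homeomorphism of the fibre, so it commutes with `tsum`.
-/

open Matrix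

theorem smul_sub_of_smul_add {H G : Type*} [Monoid H] [AddGroup G] [MulAction H G]
    (hadd : ∀ (h : H) (x y : G), h • (x + y) = h • x + h • y) (h : H) (x y : G) :
    h • (x - y) = h • x - h • y :=
  eq_sub_of_add_eq (by rw [← hadd, sub_add_cancel])

theorem Matrix.GeneralLinearGroup.mulVec_tsum {ι R β : Type*} [Fintype ι] [DecidableEq ι]
    [CommRing R] [TopologicalSpace R] [IsTopologicalRing R] [T2Space R]
    (A : GL ι R) (f : β → ι → R) :
    (A : Matrix ι ι R) *ᵥ ∑' b, f b = ∑' b, (A : Matrix ι ι R) *ᵥ f b :=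
  Function.LeftInverse.map_tsum f (g := mulVecLin (A : Matrix ι ι R))
    (continuous_const.matrix_mulVec continuous_id)
    (g' := (((A⁻¹ : GL ι R) : Matrix ι ι R) *ᵥ ·)) (continuous_const.matrix_mulVec continuous_id)
    fun v => by simp

section Steerable

variable {H X ι κ R : Type*} [Group H] [MulAction H X] [Fintype ι] [DecidableEq ι]
  [Fintype κ] [DecidableEq κ] [CommRing R]

def IsSteerableKernel (ρin : H →* GL ι R) (ρout : H →* GL κ R) (ψ : X → Matrix κ ι R) : Prop :=
  ∀ (h : H) (x : X),
    ψ (h • x) = (ρout h : Matrix κ κ R) * ψ x * (((ρin h)⁻¹ : GL ι R) : Matrix ι ι R)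

theorem IsSteerableKernel.mulVec_smul {ρin : H →* GL ι R} {ρout : H →* GL κ R}
    {ψ : X → Matrix κ ι R} (hψ : IsSteerableKernel ρin ρout ψ) (h : H) (x : X) (v : ι → R) :
    ψ (h • x) *ᵥ ((ρin h : Matrix ι ι R) *ᵥ v) = (ρout h : Matrix κ κ R) *ᵥ (ψ x *ᵥ v) := by
  rw [hψ, mulVec_mulVec, Matrix.mul_assoc, ← Units.val_mul, inv_mul_cancel, Units.val_one,
    Matrix.mul_one, mulVec_mulVec]

variable {G : Type*} [AddCommGroup G] [MulAction H G] [TopologicalSpace R] [IsTopologicalRing R]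
  [T2Space R]

noncomputable def steerableConv (ψ : G → Matrix κ ι R) (f : G → ι → R) (s : G) : κ → R :=
  ∑' s', ψ (s - s') *ᵥ f s'

theorem IsSteerableKernel.steerableConv_induced {ρin : H →* GL ι R} {ρout : H →* GL κ R}
    {ψ : G → Matrix κ ι R} (hψ : IsSteerableKernel ρin ρout ψ)
    (hadd : ∀ (h : H) (x y : G), h • (x + y) = h • x + h • y)
    (h : H) (t : G) (f : G → ι → R) (s : G) :
    steerableConv ψ (fun x => (ρin h : Matrix ι ι R) *ᵥ f (h⁻¹ • (x - t))) s
      = (ρout h : Matrix κ κ R) *ᵥ steerableConv ψ f (h⁻¹ • (s - t)) := by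
  set u := h⁻¹ • (s - t)
  have hkernel (s' : G) : s - (h • s' + t) = h • (u - s') := by
    rw [smul_sub_of_smul_add hadd, smul_inv_smul]
    abel
  let e : G ≃ G := (MulAction.toPerm h).trans (Equiv.addRight t)
  calc steerableConv ψ (fun x => (ρin h : Matrix ι ι R) *ᵥ f (h⁻¹ • (x - t))) s
      = ∑' s', ψ (s - e s') *ᵥ ((ρin h : Matrix ι ι R) *ᵥ f (h⁻¹ • (e s' - t))) :=
        (e.tsum_eq _).symm
    _ = ∑' s', (ρout h : Matrix κ κ R) *ᵥ (ψ (u - s') *ᵥ f s') := by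
        congr 1 with s'
        simp only [e, Equiv.trans_apply, MulAction.toPerm_apply, Equiv.coe_addRight,
          add_sub_cancel_right, inv_smul_smul, hkernel, hψ.mulVec_smul]
    _ = (ρout h : Matrix κ κ R) *ᵥ steerableConv ψ f u :=
        ((ρout h).mulVec_tsum _).symm

end Steerable

theorem steerable_convolution_equivariant_general
    {H : Type*} [Group H] [MulAction H (ℤ × ℤ)]
    (hadd : ∀ (h : H) (x y : ℤ × ℤ), h • (x + y) = h • x + h • y)
    {n m : ℕ}
    (ρin : H →* GL (Fin n) ℝ) (ρout : H →* GL (Fin m) ℝ)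
    (ψ : ℤ × ℤ → Matrix (Fin m) (Fin n) ℝ)
    (hsteer : ∀ (h : H) (x : ℤ × ℤ),
      ψ (h • x) = (ρout h : Matrix (Fin m) (Fin m) ℝ) * ψ x
          * (((ρin h)⁻¹ : GL (Fin n) ℝ) : Matrix (Fin n) (Fin n) ℝ))
    (h : H) (t : ℤ × ℤ) (f : ℤ × ℤ → Fin n → ℝ) (s : ℤ × ℤ) :
    ∑' s' : ℤ × ℤ,
        (ψ (s - s')).mulVec
          (((ρin h : Matrix (Fin n) (Fin n) ℝ)).mulVec (f (h⁻¹ • (s' - t))))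
      = ((ρout h : Matrix (Fin m) (Fin m) ℝ)).mulVec
          (∑' s' : ℤ × ℤ, (ψ (h⁻¹ • (s - t) - s')).mulVec (f s')) :=
  IsSteerableKernel.steerableConv_induced hsteer hadd h t f s

/-- Steerable convolution with an `H`-steerable matrix-valued
kernel `ψ : ℤ² → Matrix (Fin m) (Fin n) ℝ` (of finite support) is equivariant
under the representations of the semidirect product of `ℤ²`-translations and `H`
induced by the fiber representations `ρ_in`, `ρ_out`. -/
theorem steerable_convolution_equivariant
    {H : Type*} [Group H] [MulAction H (ℤ × ℤ)]
    (hadd : ∀ (h : H) (x y : ℤ × ℤ), h • (x + y) = h • x + h • y)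
    {n m : ℕ}
    (ρin : H →* GL (Fin n) ℝ) (ρout : H →* GL (Fin m) ℝ)
    (ψ : ℤ × ℤ → Matrix (Fin m) (Fin n) ℝ)
    (hfin : (Function.support ψ).Finite)
    (hsteer : ∀ (h : H) (x : ℤ × ℤ),
      ψ (h • x) = (ρout h : Matrix (Fin m) (Fin m) ℝ) * ψ x
          * (((ρin h)⁻¹ : GL (Fin n) ℝ) : Matrix (Fin n) (Fin n) ℝ))
    (h : H) (t : ℤ × ℤ) (f : ℤ × ℤ → Fin n → ℝ) (s : ℤ × ℤ) :
    ∑' s' : ℤ × ℤ,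
        (ψ (s - s')).mulVec
          (((ρin h : Matrix (Fin n) (Fin n) ℝ)).mulVec (f (h⁻¹ • (s' - t))))
      = ((ρout h : Matrix (Fin m) (Fin m) ℝ)).mulVec
          (∑' s' : ℤ × ℤ, (ψ (h⁻¹ • (s - t) - s')).mulVec (f s')) :=
  steerable_convolution_equivariant_general hadd ρin ρout ψ hsteer h t f s
end

section
/- Let G be a group acting on a set S, on a set A, and let X be a type so that maps are functions M : S → X with G acting by [g.M](s) = M(g⁻¹ • s). Suppose the transition kernel P : A → S → S → ℝ is G-invariant (P (g • a) (g • s) (g • s') = P a s s'), the map-conditioned reward R : (S → X) → A → S → ℝ satisfies R (g.M) (g • a) (g • s) = R M a s for all g, M, a, s, and γ ∈ ℝ. Define the Q-value update Q_{M,V}(a, s) = R M a s + γ * ∑'_{s'} P a s s' * V s'. Then the update is equivariant: for all g ∈ G, M : S → X, V : S → ℝ, a ∈ A, s ∈ S, Q_{g.M, g.V}(g • a, s) = Q_{M,V}(a, g⁻¹ • s), where [g.V](s') = V(g⁻¹ • s'). -/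
/-! The reward term is `hR` evaluated at `g⁻¹ • s`. For the expected value, invariance of `P` gives
`P (g • a) s s' = P a (g⁻¹ • s) (g⁻¹ • s')`, after which the sum is reindexed along the
bijection `s' ↦ g⁻¹ • s'` of `S`. -/

section Equivariance

variable {G S A : Type*} [Group G] [MulAction G S] [MulAction G A]

theorem tsum_comp_smul {α : Type*} [AddCommMonoid α] [TopologicalSpace α]
    (g : G) (f : S → α) : ∑' s, f (g • s) = ∑' s, f s :=
  (MulAction.toPerm g).tsum_eq f

theorem apply_smul_eq_apply_inv_smul {P : A → S → S → ℝ}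
    (hP : ∀ (g : G) (a : A) (s s' : S), P (g • a) (g • s) (g • s') = P a s s')
    (g : G) (a : A) (s s' : S) : P (g • a) s s' = P a (g⁻¹ • s) (g⁻¹ • s') := by
  simpa only [smul_inv_smul] using hP g a (g⁻¹ • s) (g⁻¹ • s')

theorem tsum_mul_inv_smul_of_invariant {P : A → S → S → ℝ}
    (hP : ∀ (g : G) (a : A) (s s' : S), P (g • a) (g • s) (g • s') = P a s s')
    (g : G) (V : S → ℝ) (a : A) (s : S) :
    ∑' s', P (g • a) s s' * V (g⁻¹ • s') = ∑' s', P a (g⁻¹ • s) s' * V s' := by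
  simp_rw [apply_smul_eq_apply_inv_smul hP g a s]
  exact tsum_comp_smul g⁻¹ fun s' => P a (g⁻¹ • s) s' * V s'

end Equivariance

/-- If the transition kernel is `G`-invariant and the
map-conditioned reward satisfies `R (g.M) (g • a) (g • s) = R M a s`, then the
Q-value update `Q_{M,V}(a, s) = R M a s + γ * ∑' s', P a s s' * V s'` is
equivariant: `Q_{g.M, g.V}(g • a, s) = Q_{M,V}(a, g⁻¹ • s)`. -/
theorem q_value_update_equivariant
    {G S A X : Type*} [Group G] [MulAction G S] [MulAction G A]
    (P : A → S → S → ℝ)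
    (hP : ∀ (g : G) (a : A) (s s' : S), P (g • a) (g • s) (g • s') = P a s s')
    (R : (S → X) → A → S → ℝ)
    (hR : ∀ (g : G) (M : S → X) (a : A) (s : S),
      R (fun s => M (g⁻¹ • s)) (g • a) (g • s) = R M a s)
    (γ : ℝ)
    (g : G) (M : S → X) (V : S → ℝ) (a : A) (s : S) :
    R (fun s => M (g⁻¹ • s)) (g • a) s
        + γ * ∑' s' : S, P (g • a) s s' * V (g⁻¹ • s')
      = R M a (g⁻¹ • s) + γ * ∑' s' : S, P a (g⁻¹ • s) s' * V s' := by
  have hReward : R (fun s => M (g⁻¹ • s)) (g • a) s = R M a (g⁻¹ • s) := by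
    simpa only [smul_inv_smul] using hR g M a (g⁻¹ • s)
  rw [hReward, tsum_mul_inv_smul_of_invariant hP g V a s]
end

section
/- Let G be a group acting on a set S, on a finite nonempty type A of actions, and let X be a type so that maps are functions M : S → X with G acting by [g.M](s) = M(g⁻¹ • s). Suppose the transition kernel P : A → S → S → ℝ is G-invariant (P (g • a) (g • s) (g • s') = P a s s'), the map-conditioned reward R : (S → X) → A → S → ℝ satisfies R (g.M) (g • a) (g • s) = R M a s, and γ ∈ ℝ. Define the Bellman optimality operator T_M[V](s) = ⨆_{a ∈ A} (R M a s + γ * ∑'_{s'} P a s s' * V s'). Then the Bellman operator is equivariant: for all g ∈ G, M : S → X, V : S → ℝ and s ∈ S, T_{g.M}[g.V](s) = T_M[V](g⁻¹ • s), where [g.V](s') = V(g⁻¹ • s'). -/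
/-! Reindexing the actions by `a ↦ g • a` and the successor states by `s' ↦ g • s'` turns each
action value of the transformed problem at `s` into the corresponding action value of the original
problem at `g⁻¹ • s`; the supremum over actions is invariant under this reindexing. -/

namespace Bellman

variable {G S A X : Type*} [Group G] [MulAction G S] [MulAction G A]

noncomputable def actionValue (P : A → S → S → ℝ) (R : (S → X) → A → S → ℝ) (γ : ℝ)
    (M : S → X) (V : S → ℝ) (a : A) (s : S) : ℝ :=
  R M a s + γ * ∑' s' : S, P a s s' * V s'

noncomputable def bellmanOperator (P : A → S → S → ℝ) (R : (S → X) → A → S → ℝ) (γ : ℝ)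
    (M : S → X) (V : S → ℝ) (s : S) : ℝ :=
  ⨆ a : A, actionValue P R γ M V a s

theorem tsum_kernel_mul_comp_inv_smul {P : A → S → S → ℝ}
    (hP : ∀ (g : G) (a : A) (s s' : S), P (g • a) (g • s) (g • s') = P a s s')
    (g : G) (V : S → ℝ) (a : A) (s : S) :
    ∑' s' : S, P (g • a) s s' * V (g⁻¹ • s') = ∑' s' : S, P a (g⁻¹ • s) s' * V s' := by
  rw [← (MulAction.toPerm g).tsum_eq]
  refine tsum_congr fun s' => ?_
  rw [MulAction.toPerm_apply, inv_smul_smul, ← hP g a (g⁻¹ • s) s', smul_inv_smul]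

theorem actionValue_smul {P : A → S → S → ℝ}
    (hP : ∀ (g : G) (a : A) (s s' : S), P (g • a) (g • s) (g • s') = P a s s')
    {R : (S → X) → A → S → ℝ}
    (hR : ∀ (g : G) (M : S → X) (a : A) (s : S),
      R (fun s => M (g⁻¹ • s)) (g • a) (g • s) = R M a s)
    (γ : ℝ) (g : G) (M : S → X) (V : S → ℝ) (a : A) (s : S) :
    actionValue P R γ (fun s => M (g⁻¹ • s)) (fun s => V (g⁻¹ • s)) (g • a) s
      = actionValue P R γ M V a (g⁻¹ • s) := by
  unfold actionValue
  rw [tsum_kernel_mul_comp_inv_smul hP, ← hR g M a (g⁻¹ • s), smul_inv_smul]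

theorem bellmanOperator_smul {P : A → S → S → ℝ}
    (hP : ∀ (g : G) (a : A) (s s' : S), P (g • a) (g • s) (g • s') = P a s s')
    {R : (S → X) → A → S → ℝ}
    (hR : ∀ (g : G) (M : S → X) (a : A) (s : S),
      R (fun s => M (g⁻¹ • s)) (g • a) (g • s) = R M a s)
    (γ : ℝ) (g : G) (M : S → X) (V : S → ℝ) (s : S) :
    bellmanOperator P R γ (fun s => M (g⁻¹ • s)) (fun s => V (g⁻¹ • s)) s
      = bellmanOperator P R γ M V (g⁻¹ • s) := by
  unfold bellmanOperator
  rw [← (MulAction.toPerm g).iSup_comp]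
  exact iSup_congr fun a => actionValue_smul hP hR γ g M V a s

end Bellman

theorem bellman_operator_equivariant_general
    {G S A X : Type*} [Group G] [MulAction G S] [MulAction G A]
    (P : A → S → S → ℝ)
    (hP : ∀ (g : G) (a : A) (s s' : S), P (g • a) (g • s) (g • s') = P a s s')
    (R : (S → X) → A → S → ℝ)
    (hR : ∀ (g : G) (M : S → X) (a : A) (s : S),
      R (fun s => M (g⁻¹ • s)) (g • a) (g • s) = R M a s)
    (γ : ℝ)
    (g : G) (M : S → X) (V : S → ℝ) (s : S) :
    (⨆ a : A, (R (fun s => M (g⁻¹ • s)) a s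
        + γ * ∑' s' : S, P a s s' * V (g⁻¹ • s')))
      = ⨆ a : A, (R M a (g⁻¹ • s) + γ * ∑' s' : S, P a (g⁻¹ • s) s' * V s') :=
  Bellman.bellmanOperator_smul hP hR γ g M V s

/-- With a `G`-invariant transition kernel and an equivariant
map-conditioned reward, the Bellman optimality operator
`T_M[V](s) = ⨆ a, (R M a s + γ * ∑' s', P a s s' * V s')` is equivariant:
`T_{g.M}[g.V](s) = T_M[V](g⁻¹ • s)`. -/
theorem bellman_operator_equivariant
    {G S A X : Type*} [Group G] [MulAction G S] [MulAction G A]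
    [Finite A] [Nonempty A]
    (P : A → S → S → ℝ)
    (hP : ∀ (g : G) (a : A) (s s' : S), P (g • a) (g • s) (g • s') = P a s s')
    (R : (S → X) → A → S → ℝ)
    (hR : ∀ (g : G) (M : S → X) (a : A) (s : S),
      R (fun s => M (g⁻¹ • s)) (g • a) (g • s) = R M a s)
    (γ : ℝ)
    (g : G) (M : S → X) (V : S → ℝ) (s : S) :
    (⨆ a : A, (R (fun s => M (g⁻¹ • s)) a s
        + γ * ∑' s' : S, P a s s' * V (g⁻¹ • s')))
      = ⨆ a : A, (R M a (g⁻¹ • s) + γ * ∑' s' : S, P a (g⁻¹ • s) s' * V s') :=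
  bellman_operator_equivariant_general P hP R hR γ g M V s
end
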